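/- arXiv:2102.06067 — 2 statements merged into one kernel-verified Lean document; each statement's English description precedes it below -/
import Mathlib

section
/- Let V be a value co-quantale with symmetric distance d_V, let D be an ultrafilter on a set I, let (a_i)_{i∈I} be a family in V, and let a be a D-ultralimit of (a_i)_{i∈I}. Then: (1) if b ∈ V and {i ∈ I : b ≤ a_i} ∈ D, then b ≤ a; (2) if b ∈ V and {i ∈ I : a_i ≤ b} ∈ D, then a ≤ b. -/
/-- A co-quantale: a complete lattice with a commutative monoid operation `+`
whose identity `0` is the bottom element and which distributes over arbitrary infima. -/
class CoQuantale (V : Type*) extends CompleteLattice V, AddCommMonoid V where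
  bot_eq_zero : (⊥ : V) = 0
  add_sInf : ∀ (a : V) (s : Set V), a + sInf s = ⨅ b ∈ s, a + b

/-- Truncated subtraction `a ∸ b := ⨅ {r | a ≤ r + b}`. -/
noncomputable def cosub {V : Type*} [CoQuantale V] (a b : V) : V :=
  sInf {r | a ≤ r + b}

/-- `x` is co-well below `y` (`x ≺ y`). -/
def cwb {L : Type*} [CompleteLattice L] (x y : L) : Prop :=
  ∀ A : Set L, sInf A ≤ x → ∃ a ∈ A, a ≤ y

/-- A value co-quantale: a co-quantale whose underlying lattice is a value lattice. -/
class ValueCoQuantale (V : Type*) extends CoQuantale V where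
  completely_distrib : ∀ a : V, a = sInf {b | cwb a b}
  zero_cwb_top : cwb (0 : V) ⊤
  cwb_inf : ∀ δ δ' : V, cwb (0 : V) δ → cwb (0 : V) δ' → cwb (0 : V) (δ ⊓ δ')

/-- The symmetric distance on a co-quantale. -/
noncomputable def symd {V : Type*} [CoQuantale V] (a b : V) : V :=
  cosub a b ⊔ cosub b a

/-- The positives filter `V⁺ = {ε : V // 0 ≺ ε}`. -/
abbrev Pos (V : Type*) [ValueCoQuantale V] : Type _ := {ε : V // cwb (0 : V) ε}

/-- `Δ : V⁺ → V⁺` is a modulus of uniform continuity for `f`. -/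
def IsModulus {V : Type*} [ValueCoQuantale V] {M N : Type*}
    (dM : M → M → V) (dN : N → N → V) (f : M → N) (Δ : Pos V → Pos V) : Prop :=
  ∀ x y : M, ∀ ε : Pos V, dM x y ≤ (Δ ε).1 → dN (f x) (f y) ≤ ε.1

/-- Uniform convergence of a sequence of maps. -/
def UnifConv {V : Type*} [ValueCoQuantale V] {M N : Type*}
    (dN : N → N → V) (f : ℕ → M → N) (g : M → N) : Prop :=
  ∀ ε : V, cwb (0 : V) ε → ∃ n : ℕ, ∀ m ≥ n, ∀ x : M, dN (f m x) (g x) ≤ ε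

/-- `l` is a `D`-ultralimit of the family `a`, w.r.t. the symmetric distance on `V`. -/
def IsUltralimit {V : Type*} [ValueCoQuantale V] {I : Type*}
    (D : Ultrafilter I) (a : I → V) (l : V) : Prop :=
  ∀ ε : V, cwb (0 : V) ε → {i | symd l (a i) ≤ ε} ∈ D


lemma coq_add_le_add_left {V : Type*} [CoQuantale V] (a : V) {x y : V} (h : x ≤ y) :
    a + x ≤ a + y := by
  have h1 : sInf {x, y} = x := by simp [sInf_insert, inf_eq_left.mpr h]
  have h2 := CoQuantale.add_sInf a {x, y}
  rw [h1] at h2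
  rw [h2]
  exact iInf₂_le y (by simp)

lemma le_cosub_add {V : Type*} [CoQuantale V] (a b : V) : a ≤ cosub a b + b := by
  have h := CoQuantale.add_sInf b {r | a ≤ r + b}
  have : a ≤ b + sInf {r : V | a ≤ r + b} := by
    rw [h]
    exact le_iInf₂ fun r hr => by rw [add_comm]; exact hr
  calc a ≤ b + cosub a b := this
    _ = cosub a b + b := add_comm _ _

lemma le_of_forall_pos_add {V : Type*} [ValueCoQuantale V] {x y : V}
    (h : ∀ ε : V, cwb (0 : V) ε → x ≤ ε + y) : x ≤ y := by
  have h0 : sInf {ε : V | cwb (0 : V) ε} = 0 := (ValueCoQuantale.completely_distrib 0).symm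
  have h2 := CoQuantale.add_sInf y {ε : V | cwb (0 : V) ε}
  rw [h0, add_zero] at h2
  rw [h2]
  exact le_iInf₂ fun ε hε => by rw [add_comm]; exact h ε hε

/-- bounding `D`-ultralimits from below and above. -/
theorem ultralimit_bounds {V : Type*} [ValueCoQuantale V] {I : Type*}
    (D : Ultrafilter I) (a : I → V) (l : V) (hl : IsUltralimit D a l) (b : V) :
    ({i : I | b ≤ a i} ∈ D → b ≤ l) ∧ ({i : I | a i ≤ b} ∈ D → l ≤ b) := by
  constructor
  · intro hb
    apply le_of_forall_pos_add
    intro ε hε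
    obtain ⟨i, hi1, hi2⟩ := Filter.nonempty_of_mem (Filter.inter_mem hb (hl ε hε))
    have h1 : a i ≤ ε + l := by
      calc a i ≤ cosub (a i) l + l := le_cosub_add _ _
        _ = l + cosub (a i) l := add_comm _ _
        _ ≤ l + ε := coq_add_le_add_left l (le_trans le_sup_right hi2)
        _ = ε + l := add_comm _ _
    exact le_trans hi1 h1
  · intro hb
    apply le_of_forall_pos_add
    intro ε hε
    obtain ⟨i, hi1, hi2⟩ := Filter.nonempty_of_mem (Filter.inter_mem hb (hl ε hε))
    calc l ≤ cosub l (a i) + a i := le_cosub_add _ _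
      _ ≤ cosub l (a i) + b := coq_add_le_add_left _ hi1
      _ = b + cosub l (a i) := add_comm _ _
      _ ≤ b + ε := coq_add_le_add_left b (le_trans le_sup_left hi2)
      _ = ε + b := add_comm _ _
end

section
/- Let V be a value co-quantale with symmetric distance d_V, D an ultrafilter on a set I, and (M_i, d_{M_i})_{i∈I} a family of V-continuity spaces each of whose distances is symmetric (d_{M_i}(x,y) = d_{M_i}(y,x)). Let (x_i), (y_i), (z_i) ∈ ∏_{i∈I} M_i. If 0 is a D-ultralimit of (d_{M_i}(x_i,y_i))_{i∈I} and 0 is a D-ultralimit of (d_{M_i}(y_i,z_i))_{i∈I}, then every D-ultralimit c of (d_{M_i}(x_i,z_i))_{i∈I} equals 0. (Hence the relation (x_i) ∼ (y_i) iff 0 is a D-ultralimit of (d_{M_i}(x_i,y_i)) is transitive, and is an equivalence relation on ∏_{i∈I} M_i.) -/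
section Aux

variable {V : Type*} [CoQuantale V]

lemma my_zero_le (a : V) : (0 : V) ≤ a := by
  rw [← CoQuantale.bot_eq_zero]; exact bot_le

lemma my_add_mono_left {a b : V} (c : V) (h : a ≤ b) : c + a ≤ c + b := by
  have h1 : sInf ({a, b} : Set V) = a := by
    rw [sInf_insert, sInf_singleton]; exact inf_eq_left.mpr h
  calc c + a = c + sInf ({a, b} : Set V) := by rw [h1]
  _ = ⨅ b' ∈ ({a, b} : Set V), c + b' := CoQuantale.add_sInf c _
  _ ≤ c + b := iInf₂_le b (by simp)

lemma my_add_mono {a b c e : V} (h1 : a ≤ b) (h2 : c ≤ e) : a + c ≤ b + e :=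
  le_trans (my_add_mono_left a h2) (by rw [add_comm a e, add_comm b e]; exact my_add_mono_left e h1)

lemma my_le_cosub_add (a b : V) : a ≤ cosub a b + b := by
  unfold cosub
  rw [add_comm, CoQuantale.add_sInf]
  exact le_iInf₂ fun r hr => by rw [add_comm]; exact hr

lemma my_symd_zero (a : V) : symd 0 a = a := by
  have h1 : cosub (0 : V) a = 0 := by
    apply le_antisymm _ (my_zero_le _)
    exact sInf_le (my_zero_le _)
  have h2 : cosub a (0 : V) = a := by
    unfold cosub
    apply le_antisymm (sInf_le (by simp [add_zero]))
    exact le_sInf fun r hr => by simpa [add_zero] using hr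
  unfold symd
  rw [h1, h2]
  exact sup_eq_right.mpr (my_zero_le a)

end Aux

section Aux2

variable {V : Type*} [ValueCoQuantale V]

lemma my_sInf_pos : sInf {b : V | cwb (0 : V) b} = 0 :=
  (ValueCoQuantale.completely_distrib (0 : V)).symm

lemma my_half {ε : V} (hε : cwb (0 : V) ε) :
    ∃ δ : V, cwb (0 : V) δ ∧ δ + δ ≤ ε := by
  set P : Set V := {b : V | cwb (0 : V) b} with hP
  set A : Set V := {s : V | ∃ δ ∈ P, ∃ δ' ∈ P, s = δ + δ'} with hA
  have h1 : ∀ δ ∈ P, sInf A ≤ δ := by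
    intro δ hδ
    have h2 : sInf A ≤ ⨅ δ' ∈ P, δ + δ' :=
      le_iInf₂ fun δ' h' => sInf_le ⟨δ, hδ, δ', h', rfl⟩
    rw [← CoQuantale.add_sInf, my_sInf_pos, add_zero] at h2
    exact h2
  have h3 : sInf A ≤ 0 := by
    rw [← my_sInf_pos]; exact le_sInf h1
  obtain ⟨s, hs, hsle⟩ := hε A h3
  obtain ⟨δ, hδ, δ', hδ', rfl⟩ := hs
  refine ⟨δ ⊓ δ', ValueCoQuantale.cwb_inf δ δ' hδ hδ', ?_⟩
  exact le_trans (my_add_mono (inf_le_left : δ ⊓ δ' ≤ δ) (inf_le_right : δ ⊓ δ' ≤ δ')) hsle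

lemma my_third {ε : V} (hε : cwb (0 : V) ε) :
    ∃ γ : V, cwb (0 : V) γ ∧ γ + γ + γ ≤ ε := by
  obtain ⟨δ, hδ, hδε⟩ := my_half hε
  obtain ⟨γ, hγ, hγδ⟩ := my_half hδ
  refine ⟨γ, hγ, ?_⟩
  have hγγ : γ ≤ γ + γ := by
    calc γ = γ + 0 := (add_zero γ).symm
    _ ≤ γ + γ := my_add_mono_left γ (my_zero_le γ)
  calc γ + γ + γ ≤ (γ + γ) + (γ + γ) := my_add_mono_left _ hγγ
  _ ≤ δ + δ := my_add_mono hγδ hγδ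
  _ ≤ ε := hδε

end Aux2

/-- transitivity of the relation `∼` on `∏ i, M i`. -/
theorem ultraproduct_rel_trans {V : Type*} [ValueCoQuantale V] {I : Type*}
    (D : Ultrafilter I) (M : I → Type*) (d : ∀ i, M i → M i → V)
    (hrefl : ∀ i (x : M i), d i x x = 0)
    (htrans : ∀ i (x y z : M i), d i x y ≤ d i x z + d i z y)
    (hsymm : ∀ i (x y : M i), d i x y = d i y x)
    (x y z : ∀ i, M i)
    (hxy : IsUltralimit D (fun i => d i (x i) (y i)) 0)
    (hyz : IsUltralimit D (fun i => d i (y i) (z i)) 0) :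
    ∀ c : V, IsUltralimit D (fun i => d i (x i) (z i)) c → c = 0 := by
  intro c hc
  apply le_antisymm _ (my_zero_le c)
  have key : ∀ ε : V, cwb (0 : V) ε → c ≤ ε := by
    intro ε hε
    obtain ⟨γ, hγ, hγε⟩ := my_third hε
    have S1 := hxy γ hγ
    have S2 := hyz γ hγ
    have S3 := hc γ hγ
    simp only [my_symd_zero] at S1 S2
    have hmem := Filter.inter_mem (Filter.inter_mem S1 S2) S3
    obtain ⟨i, ⟨⟨h1, h2⟩, h3⟩⟩ := Filter.nonempty_of_mem hmem
    have hcos : cosub c (d i (x i) (z i)) ≤ γ := le_trans le_sup_left h3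
    calc c ≤ cosub c (d i (x i) (z i)) + d i (x i) (z i) := my_le_cosub_add _ _
    _ ≤ γ + (d i (x i) (y i) + d i (y i) (z i)) :=
        my_add_mono hcos (htrans i (x i) (z i) (y i))
    _ ≤ γ + (γ + γ) := my_add_mono_left γ (my_add_mono h1 h2)
    _ ≤ γ + γ + γ := by rw [add_assoc]
    _ ≤ ε := hγε
  calc c ≤ sInf {b : V | cwb (0 : V) b} := le_sInf key
  _ = 0 := my_sInf_pos
end
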